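/- Let α > 0, s ≥ 0, and W ∈ B^s(ℝ^d). The operator T u := (α − Δ)^{-1}(W u) is a bounded linear operator from B^s(ℝ^d) to itself with operator norm at most 2^{s/2} ‖W‖_{B^s} / α. -/

import Mathlib

/-!
On the Fourier side `T u` is `(Ŵ ∗ û)(ξ) / (α + |ξ|²)`. Peetre's inequality
`(1+|ξ|²)^{s/2} ≤ 2^{s/2} (1+|η|²)^{s/2} (1+|ξ-η|²)^{s/2}` dominates the weighted modulus of
`Ŵ ∗ û` by `2^{s/2}` times the convolution of the weighted moduli of `Ŵ` and `û`, whose integral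
is `‖W‖_{B^s} ‖u‖_{B^s}` by Fubini; so `B^s` is an algebra. The symbol `1/(α+|ξ|²)` is bounded
by `1/α`, and a bounded Fourier multiplier scales the Barron norm by at most its bound.
-/

open MeasureTheory Complex

noncomputable section

/-- Euclidean space `ℝ^d`. -/
abbrev Ed (d : ℕ) := EuclideanSpace ℝ (Fin d)

/-- Inverse Fourier transform (with the convention of the paper):
`g(x) = ∫ v(ξ) e^{i x·ξ} dξ`, so that `v = ĝ` is the Fourier transform of `g`. -/
def invFT {d : ℕ} (v : Ed d → ℂ) (x : Ed d) : ℂ :=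
  ∫ ξ, v ξ * Complex.exp (Complex.I * ((inner ℝ ξ x : ℝ) : ℂ))

/-- `g` has Fourier transform (profile) `v`, i.e. `ĝ = v ∈ L¹` and
`g(x) = ∫ v(ξ) e^{i x·ξ} dξ`. -/
def HasFT {d : ℕ} (g : Ed d → ℂ) (v : Ed d → ℂ) : Prop :=
  Integrable v ∧ ∀ x, g x = invFT v x

/-- The spectral Barron weight `(1+|ξ|²)^{s/2}`. -/
def bWeight (s : ℝ) {d : ℕ} (ξ : Ed d) : ℝ := (1 + ‖ξ‖ ^ 2) ^ (s / 2)

/-- The spectral Barron norm `∫ |ĝ(ξ)| (1+|ξ|²)^{s/2} dξ`, expressed in terms of `v = ĝ`. -/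
def bNorm {d : ℕ} (s : ℝ) (v : Ed d → ℂ) : ℝ := ∫ ξ, ‖v ξ‖ * bWeight s ξ

/-- Membership in the spectral Barron space `B^s`, on the Fourier side. -/
def bMem {d : ℕ} (s : ℝ) (v : Ed d → ℂ) : Prop :=
  Integrable (fun ξ => ‖v ξ‖ * bWeight s ξ)

local notation:67 f " ⋆ℝ " g:66 => convolution f g (ContinuousLinearMap.mul ℝ ℝ) volume
local notation:67 f " ⋆ℂ " g:66 => convolution f g (ContinuousLinearMap.mul ℂ ℂ) volume

lemma one_add_norm_add_sq_le {E : Type*} [SeminormedAddCommGroup E] (a b : E) :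
    1 + ‖a + b‖ ^ 2 ≤ 2 * (1 + ‖a‖ ^ 2) * (1 + ‖b‖ ^ 2) := by
  have h := pow_le_pow_left₀ (norm_nonneg _) (norm_add_le a b) 2
  nlinarith [sq_nonneg (‖a‖ - ‖b‖), sq_nonneg (‖a‖ * ‖b‖)]

section Barron

variable {d : ℕ} {s : ℝ}

def bDensity (s : ℝ) (v : Ed d → ℂ) (ξ : Ed d) : ℝ := ‖v ξ‖ * bWeight s ξ

lemma bMem.integrable_bDensity {v : Ed d → ℂ} (hv : bMem s v) : Integrable (bDensity s v) := hv

lemma integral_bDensity (s : ℝ) (v : Ed d → ℂ) : ∫ ξ, bDensity s v ξ = bNorm s v := rfl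

lemma bWeight_pos (s : ℝ) (ξ : Ed d) : 0 < bWeight s ξ := by
  unfold bWeight; positivity

lemma continuous_bWeight (s : ℝ) : Continuous (bWeight s : Ed d → ℝ) :=
  (continuous_const.add (continuous_norm.pow 2)).rpow_const fun ξ =>
    Or.inl (by positivity : (1 + ‖ξ‖ ^ 2 : ℝ) ≠ 0)

lemma bDensity_nonneg (s : ℝ) (v : Ed d → ℂ) (ξ : Ed d) : 0 ≤ bDensity s v ξ :=
  mul_nonneg (norm_nonneg _) (bWeight_pos s ξ).le

/-- Peetre's inequality. -/
lemma bWeight_le_mul_bWeight_sub (hs : 0 ≤ s) (ξ η : Ed d) :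
    bWeight s ξ ≤ 2 ^ (s / 2) * bWeight s η * bWeight s (ξ - η) := by
  have h := one_add_norm_add_sq_le η (ξ - η)
  rw [add_sub_cancel] at h
  unfold bWeight
  rw [← Real.mul_rpow (by positivity) (by positivity),
    ← Real.mul_rpow (by positivity) (by positivity)]
  exact Real.rpow_le_rpow (by positivity) h (by positivity)

lemma bDensity_convolution_le (hs : 0 ≤ s) {f g : Ed d → ℂ} {ξ : Ed d}
    (hfg : ConvolutionExistsAt (bDensity s f) (bDensity s g) ξ (ContinuousLinearMap.mul ℝ ℝ)) :
    bDensity s (f ⋆ℂ g) ξ ≤ 2 ^ (s / 2) * (bDensity s f ⋆ℝ bDensity s g) ξ := by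
  have hpeetre (η : Ed d) : ‖f η * g (ξ - η)‖ * bWeight s ξ ≤
      2 ^ (s / 2) * (bDensity s f η * bDensity s g (ξ - η)) := by
    rw [norm_mul]
    calc ‖f η‖ * ‖g (ξ - η)‖ * bWeight s ξ
        ≤ ‖f η‖ * ‖g (ξ - η)‖ * (2 ^ (s / 2) * bWeight s η * bWeight s (ξ - η)) := by
          gcongr; exact bWeight_le_mul_bWeight_sub hs ξ η
      _ = 2 ^ (s / 2) * (bDensity s f η * bDensity s g (ξ - η)) := by
          unfold bDensity; ring
  rw [bDensity, convolution_mul (𝕜 := ℂ), convolution_mul (𝕜 := ℝ), ← integral_const_mul]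
  calc ‖∫ η, f η * g (ξ - η)‖ * bWeight s ξ
      ≤ (∫ η, ‖f η * g (ξ - η)‖) * bWeight s ξ :=
        mul_le_mul_of_nonneg_right (norm_integral_le_integral_norm _) (bWeight_pos s ξ).le
    _ = ∫ η, ‖f η * g (ξ - η)‖ * bWeight s ξ := (integral_mul_const _ _).symm
    _ ≤ ∫ η, 2 ^ (s / 2) * (bDensity s f η * bDensity s g (ξ - η)) :=
        integral_mono_of_nonneg
          (.of_forall fun _ => mul_nonneg (norm_nonneg _) (bWeight_pos s ξ).le)
          (hfg.const_mul _) (.of_forall hpeetre)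

lemma ae_bDensity_convolution_le (hs : 0 ≤ s) {f g : Ed d → ℂ} (hfs : bMem s f)
    (hgs : bMem s g) :
    ∀ᵐ ξ, bDensity s (f ⋆ℂ g) ξ ≤ 2 ^ (s / 2) * (bDensity s f ⋆ℝ bDensity s g) ξ :=
  (hfs.integrable_bDensity.ae_convolution_exists (ContinuousLinearMap.mul ℝ ℝ)
    hgs.integrable_bDensity).mono fun _ => bDensity_convolution_le hs

lemma bMem_convolution (hs : 0 ≤ s) {f g : Ed d → ℂ} (hf : Integrable f) (hg : Integrable g)
    (hfs : bMem s f) (hgs : bMem s g) : bMem s (f ⋆ℂ g) := by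
  have hmeas : AEStronglyMeasurable (bDensity s (f ⋆ℂ g)) :=
    (hf.integrable_convolution _ hg).aestronglyMeasurable.norm.mul
      (continuous_bWeight s).aestronglyMeasurable
  have hconv := hfs.integrable_bDensity.integrable_convolution (ContinuousLinearMap.mul ℝ ℝ)
    hgs.integrable_bDensity
  refine (hconv.const_mul (2 ^ (s / 2))).mono' hmeas ?_
  filter_upwards [ae_bDensity_convolution_le hs hfs hgs] with ξ hξ
  exact (Real.norm_of_nonneg (bDensity_nonneg s _ ξ)).trans_le hξ

lemma bNorm_convolution_le (hs : 0 ≤ s) {f g : Ed d → ℂ} (hfs : bMem s f) (hgs : bMem s g) :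
    bNorm s (f ⋆ℂ g) ≤ 2 ^ (s / 2) * bNorm s f * bNorm s g := by
  calc bNorm s (f ⋆ℂ g)
      ≤ ∫ ξ, 2 ^ (s / 2) * (bDensity s f ⋆ℝ bDensity s g) ξ :=
        integral_mono_of_nonneg (.of_forall (bDensity_nonneg s _))
          ((hfs.integrable_bDensity.integrable_convolution (ContinuousLinearMap.mul ℝ ℝ)
            hgs.integrable_bDensity).const_mul _) (ae_bDensity_convolution_le hs hfs hgs)
    _ = 2 ^ (s / 2) * bNorm s f * bNorm s g := by
        rw [integral_const_mul, integral_convolution _ hfs.integrable_bDensity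
          hgs.integrable_bDensity, integral_bDensity, integral_bDensity, mul_assoc]
        rfl

lemma bDensity_mul_le {v m : Ed d → ℂ} {C : ℝ} (hm : ∀ ξ, ‖m ξ‖ ≤ C) (ξ : Ed d) :
    bDensity s (fun ξ => v ξ * m ξ) ξ ≤ C * bDensity s v ξ := by
  calc ‖v ξ * m ξ‖ * bWeight s ξ = ‖m ξ‖ * bDensity s v ξ := by rw [norm_mul, bDensity]; ring
    _ ≤ C * bDensity s v ξ := mul_le_mul_of_nonneg_right (hm ξ) (bDensity_nonneg s v ξ)

lemma bMem_mul {v m : Ed d → ℂ} {C : ℝ} (hv : AEStronglyMeasurable v)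
    (hm : AEStronglyMeasurable m) (hmC : ∀ ξ, ‖m ξ‖ ≤ C) (hvs : bMem s v) :
    bMem s (fun ξ => v ξ * m ξ) := by
  refine (hvs.integrable_bDensity.const_mul C).mono'
    ((hv.mul hm).norm.mul (continuous_bWeight s).aestronglyMeasurable) (.of_forall fun ξ => ?_)
  exact (Real.norm_of_nonneg (bDensity_nonneg s _ ξ)).trans_le (bDensity_mul_le hmC ξ)

lemma bNorm_mul_le {v m : Ed d → ℂ} {C : ℝ} (hmC : ∀ ξ, ‖m ξ‖ ≤ C) (hvs : bMem s v) :
    bNorm s (fun ξ => v ξ * m ξ) ≤ C * bNorm s v := by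
  rw [← integral_bDensity, ← integral_bDensity, ← integral_const_mul]
  exact integral_mono_of_nonneg (.of_forall (bDensity_nonneg s _))
    (hvs.integrable_bDensity.const_mul C) (.of_forall (bDensity_mul_le hmC))

end Barron

lemma norm_inv_resolvent_le {α : ℝ} (hα : 0 < α) (r : ℝ) : ‖((α : ℂ) + (r : ℂ) ^ 2)⁻¹‖ ≤ α⁻¹ := by
  rw [← ofReal_pow, ← ofReal_add, norm_inv, norm_real, Real.norm_of_nonneg (by positivity)]
  exact inv_anti₀ hα (le_add_of_nonneg_right (sq_nonneg r))

/-- `T u` is represented by its Fourier transform `(Ŵ ∗ û)(ξ)/(α+|ξ|²)`. -/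
theorem barron_T_bounded {d : ℕ} (s α : ℝ) (hα : 0 < α) (hs : 0 ≤ s)
    (W : Ed d → ℝ) (vW : Ed d → ℂ) (hW : HasFT (fun x => (W x : ℂ)) vW)
    (hWs : bMem s vW) :
    ∀ (u : Ed d → ℝ) (vu : Ed d → ℂ), HasFT (fun x => (u x : ℂ)) vu → bMem s vu →
      bMem s (fun ξ => (∫ η, vW η * vu (ξ - η)) / ((α : ℂ) + (‖ξ‖ : ℂ) ^ 2)) ∧
      bNorm s (fun ξ => (∫ η, vW η * vu (ξ - η)) / ((α : ℂ) + (‖ξ‖ : ℂ) ^ 2)) ≤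
        (2 : ℝ) ^ (s / 2) * bNorm s vW / α * bNorm s vu := by
  intro u vu hu hus
  have hconv : bMem s (vW ⋆ℂ vu) := bMem_convolution hs hW.1 hu.1 hWs hus
  have hconv_meas : AEStronglyMeasurable (vW ⋆ℂ vu) :=
    (hW.1.integrable_convolution _ hu.1).aestronglyMeasurable
  have hres (ξ : Ed d) := norm_inv_resolvent_le hα ‖ξ‖
  have hres_meas : AEStronglyMeasurable fun ξ : Ed d => ((α : ℂ) + (‖ξ‖ : ℂ) ^ 2)⁻¹ := by
    fun_prop
  simp_rw [div_eq_mul_inv]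
  refine ⟨bMem_mul hconv_meas hres_meas hres hconv, ?_⟩
  calc bNorm s (fun ξ => (vW ⋆ℂ vu) ξ * ((α : ℂ) + (‖ξ‖ : ℂ) ^ 2)⁻¹)
      ≤ α⁻¹ * bNorm s (vW ⋆ℂ vu) := bNorm_mul_le hres hconv
    _ ≤ α⁻¹ * (2 ^ (s / 2) * bNorm s vW * bNorm s vu) := by
        gcongr; exact bNorm_convolution_le hs hWs hus
    _ = 2 ^ (s / 2) * bNorm s vW / α * bNorm s vu := by ring
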